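/- Let 𝕋 = {z ∈ ℂ : |z| = 1}, let A = C(𝕋), and let α₁ : A → A be the order-two *-automorphism α₁(f)(z) = f(conj(z)). Let S ⊆ M₂(C(𝕋)) be the concrete crossed product for (C(𝕋), α₁). Let 𝓑 = { h ∈ C([-1, 1], M₂(ℂ)) : h(1) and h(-1) are diagonal matrices }. For f ∈ C(𝕋) and t ∈ [-1, 1] set z(t) = t + i·√(1 - t²) and ψ(f)(t) = (1/2)·[[f(conj(z(t))) + f(z(t)), f(conj(z(t))) - f(z(t))], [f(conj(z(t))) - f(z(t)), f(conj(z(t))) + f(z(t))]], and let w ∈ C([-1, 1], M₂(ℂ)) be the constant function [[1, 0], [0, -1]]. Then the map Φ : S → C([-1, 1], M₂(ℂ)) defined by Φ([[f, g], [α₁(g), α₁(f)]]) = ψ(f) + ψ(g)·w is an injective *-homomorphism whose range is exactly 𝓑; thus S is *-isomorphic to 𝓑. -/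

import Mathlib

open Matrix

noncomputable section

/-- The unit circle `𝕋 = {z ∈ ℂ : |z| = 1}`. -/
abbrev Tc : Type := Metric.sphere (0 : ℂ) 1

/-- The interval `[-1, 1]`. -/
abbrev Ic : Type := Set.Icc (-1 : ℝ) 1

/-- Complex conjugation `z ↦ conj z` on the circle. -/
def conjT (z : Tc) : Tc :=
  ⟨starRingEnd ℂ (z : ℂ), by
    have hz := z.2
    rw [mem_sphere_zero_iff_norm] at hz ⊢
    simp [hz]⟩

/-- The parametrization `z(t) = t + i √(1 - t²)` of the upper half circle. -/
def zmap (t : Ic) : Tc :=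
  ⟨((t : ℝ) : ℂ) + Real.sqrt (1 - (t : ℝ) ^ 2) * Complex.I, by
    have h1 : (0 : ℝ) ≤ 1 - (t : ℝ) ^ 2 := by nlinarith [t.2.1, t.2.2]
    rw [mem_sphere_zero_iff_norm, Complex.norm_add_mul_I,
      Real.sq_sqrt h1]
    have : (t : ℝ) ^ 2 + (1 - (t : ℝ) ^ 2) = 1 := by ring
    rw [this, Real.sqrt_one]⟩

lemma continuous_conjT : Continuous conjT :=
  Continuous.subtype_mk (continuous_star.comp continuous_subtype_val) _

lemma continuous_zmap : Continuous zmap := by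
  apply Continuous.subtype_mk
  apply Continuous.add
  · exact Complex.continuous_ofReal.comp continuous_subtype_val
  · exact (Complex.continuous_ofReal.comp (Real.continuous_sqrt.comp
      (by continuity))).mul continuous_const

/-- The map `ψ : C(𝕋) → C([-1,1], M₂(ℂ))` given by
`ψ(f)(t) = (1/2) [[f(conj z(t)) + f(z(t)), f(conj z(t)) - f(z(t))],
[f(conj z(t)) - f(z(t)), f(conj z(t)) + f(z(t))]]`. -/
def psiMap (f : C(Tc, ℂ)) : C(Ic, Matrix (Fin 2) (Fin 2) ℂ) :=
  ⟨fun t => (1 / 2 : ℂ) •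
      !![f (conjT (zmap t)) + f (zmap t), f (conjT (zmap t)) - f (zmap t);
         f (conjT (zmap t)) - f (zmap t), f (conjT (zmap t)) + f (zmap t)], by
    apply Continuous.fun_const_smul
    refine continuous_matrix fun i j => ?_
    have hc : Continuous fun t : Ic => f (conjT (zmap t)) :=
      f.continuous.comp (continuous_conjT.comp continuous_zmap)
    have hz : Continuous fun t : Ic => f (zmap t) :=
      f.continuous.comp continuous_zmap
    fin_cases i <;> fin_cases j <;> simp <;> continuity⟩

/-- The self-adjoint unitary `w`, the constant function `[[1, 0], [0, -1]]`. -/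
def wconst : C(Ic, Matrix (Fin 2) (Fin 2) ℂ) :=
  ContinuousMap.const Ic !![1, 0; 0, -1]

/-- The *-homomorphism `Φ`, sending `[[f, g], [α₁ g, α₁ f]]` to `ψ(f) + ψ(g)·w`. -/
def PhiA (M : Matrix (Fin 2) (Fin 2) C(Tc, ℂ)) : C(Ic, Matrix (Fin 2) (Fin 2) ℂ) :=
  psiMap (M 0 0) + psiMap (M 0 1) * wconst

/-- The endpoint `1` of `[-1, 1]`. -/
def pt1 : Ic := ⟨1, by rw [Set.mem_Icc]; constructor <;> norm_num⟩

/-- The endpoint `-1` of `[-1, 1]`. -/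
def ptm1 : Ic := ⟨-1, by rw [Set.mem_Icc]; constructor <;> norm_num⟩


lemma conjT_conjT (z : Tc) : conjT (conjT z) = z := Subtype.ext (by simp [conjT])

lemma phi_matrix (f g : C(Tc, ℂ)) (t : Ic) :
    (psiMap f + psiMap g * wconst) t = (1 / 2 : ℂ) •
      !![f (conjT (zmap t)) + f (zmap t) + (g (conjT (zmap t)) + g (zmap t)),
         f (conjT (zmap t)) - f (zmap t) - (g (conjT (zmap t)) - g (zmap t));
         f (conjT (zmap t)) - f (zmap t) + (g (conjT (zmap t)) - g (zmap t)),
         f (conjT (zmap t)) + f (zmap t) - (g (conjT (zmap t)) + g (zmap t))] := by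
  ext i j
  fin_cases i <;> fin_cases j <;>
    simp [psiMap, wconst, Matrix.mul_apply, Fin.sum_univ_two] <;> ring

lemma PhiA_formula (f g h1 h2 : C(Tc, ℂ)) :
    PhiA !![f, g; h1, h2] = psiMap f + psiMap g * wconst := by
  simp [PhiA]

section
variable (α₁ : C(Tc, ℂ) →⋆ₐ[ℂ] C(Tc, ℂ)) (hα : ∀ (f : C(Tc, ℂ)) (z : Tc), α₁ f z = f (conjT z))

lemma key_one : PhiA (1 : Matrix (Fin 2) (Fin 2) C(Tc, ℂ)) = 1 := by
  rw [show (1 : Matrix (Fin 2) (Fin 2) C(Tc, ℂ)) = !![1, 0; 0, 1] from Matrix.one_fin_two,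
    PhiA_formula]
  ext t i j
  rw [ContinuousMap.one_apply, phi_matrix]
  fin_cases i <;> fin_cases j <;> simp [Matrix.one_apply] <;> ring

lemma key_add (f g f' g' : C(Tc, ℂ)) :
    PhiA (!![f, g; α₁ g, α₁ f] + !![f', g'; α₁ g', α₁ f']) =
      PhiA !![f, g; α₁ g, α₁ f] + PhiA !![f', g'; α₁ g', α₁ f'] := by
  rw [show (!![f, g; α₁ g, α₁ f] + !![f', g'; α₁ g', α₁ f'] : Matrix _ _ _) =
      !![f + f', g + g'; α₁ g + α₁ g', α₁ f + α₁ f'] by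
    ext i j; fin_cases i <;> fin_cases j <;> simp]
  rw [PhiA_formula, PhiA_formula, PhiA_formula]
  refine ContinuousMap.ext fun t => ?_
  conv_rhs => rw [ContinuousMap.add_apply, phi_matrix, phi_matrix]
  rw [phi_matrix]
  ext i j
  fin_cases i <;> fin_cases j <;> simp <;> ring

include hα in
lemma key_mul (f g f' g' : C(Tc, ℂ)) :
    PhiA (!![f, g; α₁ g, α₁ f] * !![f', g'; α₁ g', α₁ f']) =
      PhiA !![f, g; α₁ g, α₁ f] * PhiA !![f', g'; α₁ g', α₁ f'] := by
  rw [show (!![f, g; α₁ g, α₁ f] * !![f', g'; α₁ g', α₁ f'] : Matrix _ _ _) =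
      !![f * f' + g * α₁ g', f * g' + g * α₁ f';
         α₁ g * f' + α₁ f * α₁ g', α₁ g * g' + α₁ f * α₁ f'] by
    ext i j; fin_cases i <;> fin_cases j <;>
      simp [Matrix.mul_apply, Fin.sum_univ_two]]
  rw [PhiA_formula, PhiA_formula, PhiA_formula]
  refine ContinuousMap.ext fun t => ?_
  conv_rhs => rw [ContinuousMap.mul_apply, phi_matrix, phi_matrix]
  rw [phi_matrix]
  have e1 : ∀ u : C(Tc, ℂ), α₁ u (conjT (zmap t)) = u (zmap t) := fun u => by
    rw [hα, conjT_conjT]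
  ext i j
  fin_cases i <;> fin_cases j <;>
    simp [Matrix.mul_apply, Fin.sum_univ_two, e1, hα] <;> ring

lemma key_smul (c : ℂ) (f g : C(Tc, ℂ)) :
    PhiA (c • !![f, g; α₁ g, α₁ f]) = c • PhiA !![f, g; α₁ g, α₁ f] := by
  rw [show (c • !![f, g; α₁ g, α₁ f] : Matrix _ _ _) =
      !![c • f, c • g; c • α₁ g, c • α₁ f] by
    ext i j; fin_cases i <;> fin_cases j <;> simp]
  rw [PhiA_formula, PhiA_formula]
  refine ContinuousMap.ext fun t => ?_
  conv_rhs => rw [ContinuousMap.smul_apply, phi_matrix]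
  rw [phi_matrix]
  ext i j
  fin_cases i <;> fin_cases j <;> simp <;> ring

include hα in
lemma key_star (f g : C(Tc, ℂ)) :
    PhiA (star !![f, g; α₁ g, α₁ f]) = star (PhiA !![f, g; α₁ g, α₁ f]) := by
  rw [show (star !![f, g; α₁ g, α₁ f] : Matrix _ _ _) =
      !![star f, star (α₁ g); star g, star (α₁ f)] by
    ext i j; fin_cases i <;> fin_cases j <;> simp [Matrix.star_apply]]
  rw [PhiA_formula, PhiA_formula]
  refine ContinuousMap.ext fun t => ?_
  conv_rhs => rw [ContinuousMap.star_apply, phi_matrix]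
  rw [phi_matrix]
  have e1 : ∀ u : C(Tc, ℂ), α₁ u (conjT (zmap t)) = u (zmap t) := fun u => by
    rw [hα, conjT_conjT]
  ext i j
  fin_cases i <;> fin_cases j <;>
    simp [Matrix.star_apply, e1, hα, star_div₀, star_sub, star_add] <;> ring
end

section
variable (α₁ : C(Tc, ℂ) →⋆ₐ[ℂ] C(Tc, ℂ)) (hα : ∀ (f : C(Tc, ℂ)) (z : Tc), α₁ f z = f (conjT z))

lemma phi00 (f g : C(Tc, ℂ)) (t : Ic) : (psiMap f + psiMap g * wconst) t 0 0 =
    (f (conjT (zmap t)) + f (zmap t) + (g (conjT (zmap t)) + g (zmap t))) / 2 := by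
  rw [phi_matrix]
  simp
  try ring

lemma phi01 (f g : C(Tc, ℂ)) (t : Ic) : (psiMap f + psiMap g * wconst) t 0 1 =
    (f (conjT (zmap t)) - f (zmap t) - (g (conjT (zmap t)) - g (zmap t))) / 2 := by
  rw [phi_matrix]
  simp
  try ring

lemma phi10 (f g : C(Tc, ℂ)) (t : Ic) : (psiMap f + psiMap g * wconst) t 1 0 =
    (f (conjT (zmap t)) - f (zmap t) + (g (conjT (zmap t)) - g (zmap t))) / 2 := by
  rw [phi_matrix]
  simp
  try ring

lemma phi11 (f g : C(Tc, ℂ)) (t : Ic) : (psiMap f + psiMap g * wconst) t 1 1 =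
    (f (conjT (zmap t)) + f (zmap t) - (g (conjT (zmap t)) + g (zmap t))) / 2 := by
  rw [phi_matrix]
  simp
  try ring
end

lemma normsq_one (z : Tc) : (z : ℂ).re ^ 2 + (z : ℂ).im ^ 2 = 1 := by
  have hz := z.2
  rw [mem_sphere_zero_iff_norm] at hz
  have := Complex.sq_norm (z : ℂ)
  rw [Complex.normSq_apply] at this
  nlinarith

lemma re_mem_Icc (z : Tc) : (z : ℂ).re ∈ Set.Icc (-1 : ℝ) 1 := by
  have := normsq_one z
  constructor <;> nlinarith [sq_nonneg ((z:ℂ).im)]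

lemma sqrt_eq_abs_im (z : Tc) : Real.sqrt (1 - (z : ℂ).re ^ 2) = |(z : ℂ).im| := by
  have := normsq_one z
  rw [show 1 - (z : ℂ).re ^ 2 = (z:ℂ).im ^ 2 by linarith]
  exact Real.sqrt_sq_eq_abs _

lemma zmap_of_nonneg (z : Tc) (h : 0 ≤ (z : ℂ).im) : zmap ⟨(z : ℂ).re, re_mem_Icc z⟩ = z := by
  apply Subtype.ext
  apply Complex.ext
  · simp [zmap]
  · simp [zmap, sqrt_eq_abs_im z, abs_of_nonneg h]

lemma zmap_of_nonpos (z : Tc) (h : (z : ℂ).im ≤ 0) :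
    conjT (zmap ⟨(z : ℂ).re, re_mem_Icc z⟩) = z := by
  apply Subtype.ext
  apply Complex.ext
  · simp [conjT, zmap]
  · simp [conjT, zmap, sqrt_eq_abs_im z, abs_of_nonpos h]

lemma conjT_zmap_pt1 : conjT (zmap pt1) = zmap pt1 := by
  apply Subtype.ext
  simp [conjT, zmap, pt1, Complex.ext_iff]

lemma conjT_zmap_ptm1 : conjT (zmap ptm1) = zmap ptm1 := by
  apply Subtype.ext
  simp [conjT, zmap, ptm1, Complex.ext_iff]

section
variable (α₁ : C(Tc, ℂ) →⋆ₐ[ℂ] C(Tc, ℂ)) (hα : ∀ (f : C(Tc, ℂ)) (z : Tc), α₁ f z = f (conjT z))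

lemma key_inj (f g f' g' : C(Tc, ℂ))
    (h : PhiA !![f, g; α₁ g, α₁ f] = PhiA !![f', g'; α₁ g', α₁ f']) :
    !![f, g; α₁ g, α₁ f] = !![f', g'; α₁ g', α₁ f'] := by
  rw [PhiA_formula, PhiA_formula] at h
  have hval : ∀ t : Ic,
      (f (conjT (zmap t)) = f' (conjT (zmap t)) ∧ f (zmap t) = f' (zmap t)) ∧
      (g (conjT (zmap t)) = g' (conjT (zmap t)) ∧ g (zmap t) = g' (zmap t)) := by
    intro t
    have e00 : (f (conjT (zmap t)) + f (zmap t) + (g (conjT (zmap t)) + g (zmap t))) / 2 =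
        (f' (conjT (zmap t)) + f' (zmap t) + (g' (conjT (zmap t)) + g' (zmap t))) / 2 := by
      rw [← phi00 f g t, ← phi00 f' g' t, h]
    have e01 : (f (conjT (zmap t)) - f (zmap t) - (g (conjT (zmap t)) - g (zmap t))) / 2 =
        (f' (conjT (zmap t)) - f' (zmap t) - (g' (conjT (zmap t)) - g' (zmap t))) / 2 := by
      rw [← phi01 f g t, ← phi01 f' g' t, h]
    have e10 : (f (conjT (zmap t)) - f (zmap t) + (g (conjT (zmap t)) - g (zmap t))) / 2 =
        (f' (conjT (zmap t)) - f' (zmap t) + (g' (conjT (zmap t)) - g' (zmap t))) / 2 := by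
      rw [← phi10 f g t, ← phi10 f' g' t, h]
    have e11 : (f (conjT (zmap t)) + f (zmap t) - (g (conjT (zmap t)) + g (zmap t))) / 2 =
        (f' (conjT (zmap t)) + f' (zmap t) - (g' (conjT (zmap t)) + g' (zmap t))) / 2 := by
      rw [← phi11 f g t, ← phi11 f' g' t, h]
    exact ⟨⟨by linear_combination (e00 + e10 + e11 + e01) / 2,
            by linear_combination (e00 - e10 + e11 - e01) / 2⟩,
           ⟨by linear_combination (e00 + e10 - e11 - e01) / 2,
            by linear_combination (e00 - e10 - e11 + e01) / 2⟩⟩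
  have hf : f = f' := by
    ext z
    rcases le_or_gt 0 (z : ℂ).im with hz | hz
    · rw [← zmap_of_nonneg z hz]; exact (hval _).1.2
    · rw [← zmap_of_nonpos z hz.le]; exact (hval _).1.1
  have hg : g = g' := by
    ext z
    rcases le_or_gt 0 (z : ℂ).im with hz | hz
    · rw [← zmap_of_nonneg z hz]; exact (hval _).2.2
    · rw [← zmap_of_nonpos z hz.le]; exact (hval _).2.1
  rw [hf, hg]

lemma key_mem (f g : C(Tc, ℂ)) :
    PhiA !![f, g; α₁ g, α₁ f] pt1 0 1 = 0 ∧ PhiA !![f, g; α₁ g, α₁ f] pt1 1 0 = 0 ∧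
    PhiA !![f, g; α₁ g, α₁ f] ptm1 0 1 = 0 ∧ PhiA !![f, g; α₁ g, α₁ f] ptm1 1 0 = 0 := by
  rw [PhiA_formula]
  refine ⟨?_, ?_, ?_, ?_⟩
  · rw [phi01, conjT_zmap_pt1]; ring
  · rw [phi10, conjT_zmap_pt1]; ring
  · rw [phi01, conjT_zmap_ptm1]; ring
  · rw [phi10, conjT_zmap_ptm1]; ring
end

def glue (hu hl : C(Ic, ℂ)) : Tc → ℂ := fun z =>
  if 0 ≤ (z : ℂ).im then hu (Set.projIcc (-1) 1 (by norm_num) (z : ℂ).re)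
  else hl (Set.projIcc (-1) 1 (by norm_num) (z : ℂ).re)

lemma continuous_glue (hu hl : C(Ic, ℂ)) (h1 : hu pt1 = hl pt1) (hm1 : hu ptm1 = hl ptm1) :
    Continuous (glue hu hl) := by
  unfold glue
  apply Continuous.if_le
  · exact hu.continuous.comp (continuous_projIcc.comp
      (Complex.continuous_re.comp continuous_subtype_val))
  · exact hl.continuous.comp (continuous_projIcc.comp
      (Complex.continuous_re.comp continuous_subtype_val))
  · exact continuous_const
  · exact Complex.continuous_im.comp continuous_subtype_val
  · intro z hz
    have h := normsq_one z
    rw [← hz] at h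
    have : (z : ℂ).re = 1 ∨ (z : ℂ).re = -1 := by
      have hsq : ((z : ℂ).re - 1) * ((z : ℂ).re + 1) = 0 := by nlinarith
      rcases mul_eq_zero.1 hsq with h | h
      · left; linarith
      · right; linarith
    rcases this with h | h <;> rw [h]
    · have : Set.projIcc (-1:ℝ) 1 (by norm_num) 1 = pt1 := by
        apply Subtype.ext; simp [Set.projIcc, pt1]
      rw [this, h1]
    · have : Set.projIcc (-1:ℝ) 1 (by norm_num) (-1) = ptm1 := by
        apply Subtype.ext; simp [Set.projIcc, ptm1]
      rw [this, hm1]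

lemma glue_zmap (hu hl : C(Ic, ℂ)) (t : Ic) : glue hu hl (zmap t) = hu t := by
  have him : (0:ℝ) ≤ (zmap t : ℂ).im := by
    have := Real.sqrt_nonneg (1 - (t:ℝ)^2)
    simpa [zmap] using this
  have hre : (zmap t : ℂ).re = (t : ℝ) := by simp [zmap]
  rw [glue, if_pos him, hre, Set.projIcc_val (by norm_num) t]

lemma glue_conjT_zmap (hu hl : C(Ic, ℂ)) (h1 : hu pt1 = hl pt1) (hm1 : hu ptm1 = hl ptm1)
    (t : Ic) : glue hu hl (conjT (zmap t)) = hl t := by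
  have hre : (conjT (zmap t) : ℂ).re = (t : ℝ) := by simp [conjT, zmap]
  have him : (conjT (zmap t) : ℂ).im = -Real.sqrt (1 - (t:ℝ)^2) := by simp [conjT, zmap]
  rcases lt_or_eq_of_le (Real.sqrt_nonneg (1 - (t:ℝ)^2)) with hpos | hzero
  · rw [glue, if_neg (by rw [him]; linarith), hre, Set.projIcc_val (by norm_num) t]
  · have hsq : 1 - (t:ℝ)^2 = 0 := by
      by_contra hne
      have h0 : (0:ℝ) < 1 - (t:ℝ)^2 := lt_of_le_of_ne (by nlinarith [t.2.1, t.2.2]) (Ne.symm hne)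
      exact absurd (Real.sqrt_pos.2 h0) (by rw [← hzero]; exact lt_irrefl 0)
    have ht : t = pt1 ∨ t = ptm1 := by
      rcases eq_or_ne ((t:ℝ)) 1 with h | h
      · left; exact Subtype.ext h
      · right; apply Subtype.ext; show (t:ℝ) = -1
        have hsq2 : ((t:ℝ) - 1) * ((t:ℝ) + 1) = 0 := by nlinarith
        rcases mul_eq_zero.1 hsq2 with h2 | h2
        · exact absurd (by linarith : (t:ℝ) = 1) h
        · linarith
    rw [glue]
    rw [him, ← hzero]
    simp only [neg_zero, le_refl, if_pos]
    rw [hre, Set.projIcc_val (by norm_num) t]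
    rcases ht with h | h <;> rw [h] <;> [exact h1; exact hm1]

section
variable (α₁ : C(Tc, ℂ) →⋆ₐ[ℂ] C(Tc, ℂ))

lemma key_surj (h : C(Ic, Matrix (Fin 2) (Fin 2) ℂ))
    (hb1 : h pt1 0 1 = 0) (hb2 : h pt1 1 0 = 0)
    (hb3 : h ptm1 0 1 = 0) (hb4 : h ptm1 1 0 = 0) :
    ∃ f g : C(Tc, ℂ), PhiA !![f, g; α₁ g, α₁ f] = h := by
  have cont : ∀ i j : Fin 2, Continuous fun t : Ic => h t i j := fun i j =>
    ((continuous_apply j).comp ((continuous_apply i).comp h.continuous))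
  set Fu : C(Ic, ℂ) := ⟨fun t => (h t 0 0 - h t 1 0 + h t 1 1 - h t 0 1) / 2, by
    exact (((((cont 0 0).sub (cont 1 0)).add (cont 1 1)).sub (cont 0 1)).div_const 2)⟩ with hFu
  set Fl : C(Ic, ℂ) := ⟨fun t => (h t 0 0 + h t 1 0 + h t 1 1 + h t 0 1) / 2, by
    exact (((((cont 0 0).add (cont 1 0)).add (cont 1 1)).add (cont 0 1)).div_const 2)⟩ with hFl
  set Gu : C(Ic, ℂ) := ⟨fun t => (h t 0 0 - h t 1 0 - h t 1 1 + h t 0 1) / 2, by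
    exact (((((cont 0 0).sub (cont 1 0)).sub (cont 1 1)).add (cont 0 1)).div_const 2)⟩ with hGu
  set Gl : C(Ic, ℂ) := ⟨fun t => (h t 0 0 + h t 1 0 - h t 1 1 - h t 0 1) / 2, by
    exact (((((cont 0 0).add (cont 1 0)).sub (cont 1 1)).sub (cont 0 1)).div_const 2)⟩ with hGl
  have hF1 : Fu pt1 = Fl pt1 := by
    simp only [hFu, hFl, ContinuousMap.coe_mk]
    rw [hb1, hb2]; ring
  have hFm1 : Fu ptm1 = Fl ptm1 := by
    simp only [hFu, hFl, ContinuousMap.coe_mk]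
    rw [hb3, hb4]; ring
  have hG1 : Gu pt1 = Gl pt1 := by
    simp only [hGu, hGl, ContinuousMap.coe_mk]
    rw [hb1, hb2]; ring
  have hGm1 : Gu ptm1 = Gl ptm1 := by
    simp only [hGu, hGl, ContinuousMap.coe_mk]
    rw [hb3, hb4]; ring
  refine ⟨⟨glue Fu Fl, continuous_glue Fu Fl hF1 hFm1⟩,
          ⟨glue Gu Gl, continuous_glue Gu Gl hG1 hGm1⟩, ?_⟩
  rw [PhiA_formula]
  refine ContinuousMap.ext fun t => ?_
  have ef1 : glue Fu Fl (zmap t) = Fu t := glue_zmap Fu Fl t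
  have ef2 : glue Fu Fl (conjT (zmap t)) = Fl t := glue_conjT_zmap Fu Fl hF1 hFm1 t
  have eg1 : glue Gu Gl (zmap t) = Gu t := glue_zmap Gu Gl t
  have eg2 : glue Gu Gl (conjT (zmap t)) = Gl t := glue_conjT_zmap Gu Gl hG1 hGm1 t
  rw [phi_matrix, Matrix.eta_fin_two (h t)]
  simp only [ContinuousMap.coe_mk, ef1, ef2, eg1, eg2]
  simp only [hFu, hFl, hGu, hGl, ContinuousMap.coe_mk]
  ext i j
  fin_cases i <;> fin_cases j <;> simp <;> ring
end

/-- Let `α₁ : C(𝕋) → C(𝕋)` be the order-two *-automorphism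
`α₁ f z = f (conj z)`, let `S ⊆ M₂(C(𝕋))` be the concrete crossed product for `(C(𝕋), α₁)`,
and let `𝓑 = {h ∈ C([-1,1], M₂(ℂ)) : h(1), h(-1) diagonal}`.  Then
`Φ : S → C([-1,1], M₂(ℂ))`, `Φ [[f, g], [α₁ g, α₁ f]] = ψ(f) + ψ(g)·w`, is an injective
*-homomorphism with range exactly `𝓑`; thus `S` is *-isomorphic to `𝓑`. -/
theorem stmt15 (α₁ : C(Tc, ℂ) →⋆ₐ[ℂ] C(Tc, ℂ))
    (hα : ∀ (f : C(Tc, ℂ)) (z : Tc), α₁ f z = f (conjT z))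
    (S : Set (Matrix (Fin 2) (Fin 2) C(Tc, ℂ)))
    (hS : S = {M | ∃ f g : C(Tc, ℂ), M = !![f, g; α₁ g, α₁ f]})
    (𝓑 : Set C(Ic, Matrix (Fin 2) (Fin 2) ℂ))
    (h𝓑 : 𝓑 = {h | h pt1 0 1 = 0 ∧ h pt1 1 0 = 0 ∧ h ptm1 0 1 = 0 ∧ h ptm1 1 0 = 0}) :
    -- `Φ` is given on `S` by the announced formula
    (∀ f g : C(Tc, ℂ), PhiA !![f, g; α₁ g, α₁ f] = psiMap f + psiMap g * wconst) ∧
    -- `Φ` restricted to `S` is a unital *-homomorphism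
    (1 ∈ S) ∧ PhiA 1 = 1 ∧
    (∀ M ∈ S, ∀ N ∈ S, PhiA (M + N) = PhiA M + PhiA N) ∧
    (∀ M ∈ S, ∀ N ∈ S, PhiA (M * N) = PhiA M * PhiA N) ∧
    (∀ (c : ℂ), ∀ M ∈ S, PhiA (c • M) = c • PhiA M) ∧
    (∀ M ∈ S, PhiA (star M) = star (PhiA M)) ∧
    -- `Φ` is injective on `S`, with range exactly `𝓑`
    Set.InjOn PhiA S ∧ PhiA '' S = 𝓑 := by
  subst hS h𝓑
  refine ⟨fun f g => PhiA_formula f g _ _, ⟨1, 0, by simp [Matrix.one_fin_two]⟩, key_one,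
    ?_, ?_, ?_, ?_, ?_, ?_⟩
  · rintro M ⟨f, g, rfl⟩ N ⟨f', g', rfl⟩
    exact key_add α₁ f g f' g'
  · rintro M ⟨f, g, rfl⟩ N ⟨f', g', rfl⟩
    exact key_mul α₁ hα f g f' g'
  · rintro c M ⟨f, g, rfl⟩
    exact key_smul α₁ c f g
  · rintro M ⟨f, g, rfl⟩
    exact key_star α₁ hα f g
  · rintro M ⟨f, g, rfl⟩ N ⟨f', g', rfl⟩ hMN
    exact key_inj α₁ f g f' g' hMN
  · ext h
    constructor
    · rintro ⟨M, ⟨f, g, rfl⟩, rfl⟩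
      exact key_mem α₁ f g
    · rintro ⟨hb1, hb2, hb3, hb4⟩
      obtain ⟨f, g, hfg⟩ := key_surj α₁ h hb1 hb2 hb3 hb4
      exact ⟨!![f, g; α₁ g, α₁ f], ⟨f, g, rfl⟩, hfg⟩

end
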